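/- Let X be a topological space, d ≥ 1, and m₁,…,m_d ≥ 1 integers. Let B = B^{m₁} × ⋯ × B^{m_d}, where B^{m_i} is the closed unit ball of ℝ^{m_i}; let Int B be the product of the open unit balls and ∂B = B \ Int B. For each i ∈ {1,…,d} fix a point p_i with ‖p_i‖ = 1 in ℝ^{m_i}, and set B_i = {t ∈ B : t_i = p_i}, Int B_i = {t ∈ B : t_i = p_i and t_k lies in the open unit ball of ℝ^{m_k} for all k ≠ i}, and ∂B_i = B_i \ Int B_i. Let Ψ : B → X be a continuous map such that Ψ restricted to Int B is a homeomorphism onto Ψ(Int B) and Ψ(∂B) = Ψ(B) \ Ψ(Int B). Suppose S ⊆ {1,…,d} is such that, for each i ∈ S: Ψ restricted to Int B_i is a homeomorphism onto Ψ(Int B_i); Ψ(∂B_i) = Ψ(B_i) \ Ψ(Int B_i); Ψ restricted to Int B ∪ Int B_i is a homeomorphism onto its image; and Ψ(∂B) = ⋃_{i ∈ S} Ψ(B_i). Then ⋃_{j ∉ S} Ψ(B_j) ⊆ ⋃_{i ∈ S} ( Ψ(B_i) \ Ψ(Int B_i) ). -/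
import Mathlib


open Set

/-- The paper's purely topological lemma (lemma-order) on products of closed
balls and their faces: if `Ψ : B → X` restricts to homeomorphisms onto its
image on the open part of `B` and on the open parts of the faces `B_i`
(`i ∈ S`), with the stated frontier conditions, and the image of the boundary
of `B` is covered by the faces `Ψ(B_i)`, `i ∈ S`, then the images of the
remaining faces are contained in `⋃_{i ∈ S} (Ψ(B_i) \ Ψ(Int B_i))`. -/
theorem stmt_12 (X : Type*) [TopologicalSpace X] (d : ℕ) (hd : 1 ≤ d)
    (m : Fin d → ℕ) (hm : ∀ i, 1 ≤ m i)
    (p : ∀ i, EuclideanSpace ℝ (Fin (m i))) (hp : ∀ i, ‖p i‖ = 1)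
    (Ψ : (∀ i, EuclideanSpace ℝ (Fin (m i))) → X)
    (B IntB : Set (∀ i, EuclideanSpace ℝ (Fin (m i))))
    (hB : B = {t | ∀ i, ‖t i‖ ≤ 1})
    (hIntB : IntB = {t | ∀ i, ‖t i‖ < 1})
    (Bi IntBi : Fin d → Set (∀ i, EuclideanSpace ℝ (Fin (m i))))
    (hBi : ∀ i, Bi i = {t | (∀ k, ‖t k‖ ≤ 1) ∧ t i = p i})
    (hIntBi : ∀ i, IntBi i = {t | t i = p i ∧ ∀ k, k ≠ i → ‖t k‖ < 1})
    (hcont : ContinuousOn Ψ B)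
    (hemb : Topology.IsEmbedding (IntB.restrict Ψ))
    (hfr : Ψ '' (B \ IntB) = Ψ '' B \ Ψ '' IntB)
    (S : Finset (Fin d))
    (hembi : ∀ i ∈ S, Topology.IsEmbedding ((IntBi i).restrict Ψ))
    (hfri : ∀ i ∈ S, Ψ '' (Bi i \ IntBi i) = Ψ '' (Bi i) \ Ψ '' (IntBi i))
    (hembi' : ∀ i ∈ S, Topology.IsEmbedding ((IntB ∪ IntBi i).restrict Ψ))
    (hbd : Ψ '' (B \ IntB) = ⋃ i ∈ S, Ψ '' (Bi i)) :
    ∀ j ∉ S, Ψ '' (Bi j) ⊆ ⋃ i ∈ S, (Ψ '' (Bi i) \ Ψ '' (IntBi i)) := by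

  intro j hj x hx
  obtain ⟨t, htB, rfl⟩ := hx
  rw [hBi] at htB
  obtain ⟨htle, htj⟩ := htB
  have htB' : t ∈ B := by rw [hB]; exact htle
  have htnotInt : t ∉ IntB := by
    rw [hIntB]
    intro h
    have h1 := h j
    rw [htj, hp j] at h1
    exact lt_irrefl 1 h1
  have hmem : Ψ t ∈ ⋃ i ∈ S, Ψ '' Bi i := by
    rw [← hbd]; exact ⟨t, ⟨htB', htnotInt⟩, rfl⟩
  simp only [mem_iUnion, exists_prop] at hmem ⊢
  obtain ⟨i, hiS, hti⟩ := hmem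
  refine ⟨i, hiS, hti, ?_⟩
  rintro ⟨s, hs, heq⟩
  rw [hIntBi] at hs
  obtain ⟨hsi, hslt⟩ := hs
  have hij : i ≠ j := fun h => hj (h ▸ hiS)
  -- sequence of scalars
  set c : ℕ → ℝ := fun n => 1 - 1 / (n + 1) with hc
  have hc0 : ∀ n : ℕ, 0 ≤ c n := by
    intro n
    have : 1 / ((n : ℝ) + 1) ≤ 1 := by
      rw [div_le_one (by positivity)]
      linarith [Nat.cast_nonneg (α := ℝ) n]
    simp only [hc]; linarith
  have hc1 : ∀ n : ℕ, c n < 1 := by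
    intro n
    have : 0 < 1 / ((n : ℝ) + 1) := by positivity
    simp only [hc]; linarith
  have hclim : Filter.Tendsto c Filter.atTop (nhds 1) := by
    have h0 : Filter.Tendsto (fun n : ℕ => 1 / ((n : ℝ) + 1)) Filter.atTop (nhds 0) :=
      tendsto_one_div_add_atTop_nhds_zero_nat
    have := (tendsto_const_nhds (x := (1 : ℝ)) (f := Filter.atTop (α := ℕ))).sub h0
    simpa [hc, one_div] using this
  set u : ℕ → (∀ k, EuclideanSpace ℝ (Fin (m k))) := fun n => c n • t with hu
  have huInt : ∀ n, u n ∈ IntB := by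
    intro n
    rw [hIntB]
    intro k
    have : (u n) k = c n • t k := rfl
    rw [this, norm_smul, Real.norm_eq_abs, abs_of_nonneg (hc0 n)]
    calc c n * ‖t k‖ ≤ c n * 1 := by
          exact mul_le_mul_of_nonneg_left (htle k) (hc0 n)
      _ < 1 := by rw [mul_one]; exact hc1 n
  have hulim : Filter.Tendsto u Filter.atTop (nhds t) := by
    have := hclim.smul_const t
    simpa using this
  have hΨlim : Filter.Tendsto (fun n => Ψ (u n)) Filter.atTop (nhds (Ψ t)) := by
    have h1 : Filter.Tendsto u Filter.atTop (nhdsWithin t B) := by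
      rw [tendsto_nhdsWithin_iff]
      refine ⟨hulim, Filter.Eventually.of_forall fun n => ?_⟩
      rw [hB]
      exact fun k => le_of_lt ((hIntB ▸ huInt n) k)
    exact (hcont t htB').tendsto.comp h1
  set U := IntB ∪ IntBi i with hU
  have hsU : s ∈ U := Or.inr (by rw [hIntBi]; exact ⟨hsi, hslt⟩)
  set a : ℕ → U := fun n => ⟨u n, Or.inl (huInt n)⟩ with ha
  have halim : Filter.Tendsto a Filter.atTop (nhds (⟨s, hsU⟩ : U)) := by
    rw [(hembi' i hiS).tendsto_nhds_iff]
    have : (U.restrict Ψ) ∘ a = fun n => Ψ (u n) := rfl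
    rw [this]
    have : U.restrict Ψ ⟨s, hsU⟩ = Ψ t := by
      exact heq
    rw [this]
    exact hΨlim
  have hts : Filter.Tendsto u Filter.atTop (nhds s) :=
    (continuous_subtype_val.tendsto _).comp halim
  have hts' : t = s := tendsto_nhds_unique hulim hts
  have h1 : ‖s j‖ < 1 := hslt j (Ne.symm hij)
  rw [← hts', htj, hp j] at h1
  exact lt_irrefl 1 h1
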